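/- arXiv:2412.06186 — 2 statements merged into one kernel-verified Lean document; each statement's English description precedes it below -/
import Mathlib

section
/- Suppose a nonnegative sequence {s_k} satisfies s_{k+1} ≤ L s_k² + M r_k for all k, with L, M > 0, and suppose s_0 ≤ δ and sup_k r_k ≤ δ_r where δ and δ_r satisfy L δ ≤ 1/4 and M δ_r ≤ δ/2. Then s_k ≤ δ for all k and s_{k+1} ≤ (1/4) s_k + M r_k; hence s_k ≤ (1/4)^k s_0 + (4M/3) sup_j r_j for all k. -/
/-- Quantitative local ISS estimate for a quadratically convergent perturbed iteration. -/
theorem stmt_7 (s r : ℕ → ℝ) (L M δ δ_r : ℝ)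
    (hL : 0 < L) (hM : 0 < M)
    (hs : ∀ k, 0 ≤ s k) (hr : ∀ k, 0 ≤ r k)
    (hrec : ∀ k, s (k + 1) ≤ L * (s k) ^ 2 + M * r k)
    (h0 : s 0 ≤ δ) (hrb : ∀ k, r k ≤ δ_r)
    (hδ : L * δ ≤ 1 / 4) (hδr : M * δ_r ≤ δ / 2) :
    (∀ k, s k ≤ δ) ∧ (∀ k, s (k + 1) ≤ (1 / 4) * s k + M * r k) ∧
      (∀ k, s k ≤ (1 / 4 : ℝ) ^ k * s 0 + (4 * M / 3) * δ_r) := by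
  have hδr0 : 0 ≤ δ_r := le_trans (hr 0) (hrb 0)
  have hMδr : 0 ≤ M * δ_r := mul_nonneg hM.le hδr0
  have hδ0 : 0 ≤ δ := by nlinarith
  have hbound : ∀ k, s k ≤ δ := by
    intro k
    induction k with
    | zero => exact h0
    | succ k ih =>
      have h1 : L * (s k) ^ 2 ≤ L * δ * s k := by nlinarith [mul_nonneg (mul_nonneg hL.le (hs k)) (sub_nonneg.mpr ih)]
      have h2 : L * δ * s k ≤ (1/4) * δ := by nlinarith [mul_le_mul_of_nonneg_right hδ (hs k), ih]
      have h3 : M * r k ≤ M * δ_r := by nlinarith [hrb k]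
      nlinarith [hrec k]
  have hstep : ∀ k, s (k + 1) ≤ (1 / 4) * s k + M * r k := by
    intro k
    have h1 : L * (s k) ^ 2 ≤ (1/4) * s k := by nlinarith [mul_nonneg (mul_nonneg hL.le (hs k)) (sub_nonneg.mpr (hbound k)), mul_le_mul_of_nonneg_right hδ (hs k)]
    nlinarith [hrec k]
  refine ⟨hbound, hstep, ?_⟩
  intro k
  induction k with
  | zero => simp; nlinarith
  | succ k ih =>
    have h3 : M * r k ≤ M * δ_r := by nlinarith [hrb k]
    have := hstep k
    have hp : (0:ℝ) ≤ (1/4:ℝ)^k := by positivity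
    calc s (k+1) ≤ (1/4) * s k + M * r k := hstep k
      _ ≤ (1/4) * ((1/4:ℝ)^k * s 0 + (4*M/3) * δ_r) + M * δ_r := by nlinarith
      _ = (1/4:ℝ)^(k+1) * s 0 + (4*M/3) * δ_r := by ring
end

section
/- The 2×2 matrix M = [[1, −3], [1, 0]] is strictly semicopositive on the cone ℝ₊₊ × ℝ₊₊ (for every c = (c₁,c₂) with c₁ > 0, c₂ > 0, max{c₁(c₁ − 3c₂), c₂ c₁} > 0), but the linear map a ↦ Ma is not monotone on ℝ₊₊ × ℝ₊₊ (there exist a, b in the cone with (Ma − Mb)ᵀ(a − b) < 0). -/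
/-- The matrix [[1,-3],[1,0]] is strictly semicopositive on ℝ₊₊ × ℝ₊₊ but the
associated linear map is not monotone there. -/
theorem stmt_14 :
    (∀ c₁ c₂ : ℝ, 0 < c₁ → 0 < c₂ → 0 < max (c₁ * (c₁ - 3 * c₂)) (c₂ * c₁)) ∧
    (∃ a₁ a₂ b₁ b₂ : ℝ, 0 < a₁ ∧ 0 < a₂ ∧ 0 < b₁ ∧ 0 < b₂ ∧
      ((a₁ - 3 * a₂) - (b₁ - 3 * b₂)) * (a₁ - b₁) + (a₁ - b₁) * (a₂ - b₂) < 0) := by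
  constructor
  · intro c₁ c₂ h1 h2
    exact lt_max_of_lt_right (mul_pos h2 h1)
  · exact ⟨2, 2, 1, 1, by norm_num, by norm_num, by norm_num, by norm_num, by norm_num⟩
end
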